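/- arXiv:1807.08424 — 2 statements merged into one kernel-verified Lean document; each statement's English description precedes it below -/
import Mathlib

section
/- Let H^{(1)}, …, H^{(m)} (m ≥ 1) each be a one-dimensional k-local Hamiltonian with unit-norm terms on the n-site chain, let O be an operator supported on an adjacent interval L with |L| = l₀, and set ã := l₀/k. Let w > 0 be the unique positive real with w·e^w = e·(m + ã). Then ‖ad_{H^{(m)}} ∘ ⋯ ∘ ad_{H^{(1)}}(O)‖ ≤ ‖O‖ · (6k)^m · ((m+ã)/w)^{(m+ã) − (m+ã)/w}. -/
open scoped Matrix.Norms.L2Operator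

/-- Operators on the `n`-site chain with local dimension `d`: matrices indexed by
configurations `Fin n → Fin d`, acting on `(ℂ^d)^{⊗n}`, with the ℓ²→ℓ² operator norm. -/
abbrev ChainOp (n d : ℕ) := Matrix (Fin n → Fin d) (Fin n → Fin d) ℂ

/-- `M` is supported on the set of sites `L`: entries vanish whenever the two configurations
differ at a site outside `L`, and entries depend only on the restrictions of the
configurations to `L`. -/
def SupportedOn {n d : ℕ} (M : ChainOp n d) (L : Finset (Fin n)) : Prop :=
  (∀ x y : Fin n → Fin d, (∃ i ∉ L, x i ≠ y i) → M x y = 0) ∧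
  (∀ x y x' y' : Fin n → Fin d,
      (∀ i ∈ L, x i = x' i) → (∀ i ∈ L, y i = y' i) →
      (∀ i ∉ L, x i = y i) → (∀ i ∉ L, x' i = y' i) → M x y = M x' y')

/-- The interval of sites `{i : a ≤ i ≤ b}` (automatically intersected with `{0,…,n-1}`). -/
def chainInterval (n : ℕ) (a b : ℕ) : Finset (Fin n) :=
  Finset.univ.filter fun i : Fin n => a ≤ (i : ℕ) ∧ (i : ℕ) ≤ b

/-- `H` is a one-dimensional `k`-local Hamiltonian with unit-norm terms:
`H = Σ_j h_j` where `h_j` is supported on `{j, …, j+k-1} ∩ {0,…,n-1}` and `‖h_j‖ ≤ 1`. -/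
def IsLocalHam (n d k : ℕ) (H : ChainOp n d) : Prop :=
  ∃ h : Fin n → ChainOp n d,
    H = ∑ j, h j ∧
    ∀ j : Fin n, SupportedOn (h j) (chainInterval n j ((j : ℕ) + k - 1)) ∧ ‖h j‖ ≤ 1

/-- The adjoint action `ad_H(O) := H·O − O·H`. -/
noncomputable def ad {n d : ℕ} (H O : ChainOp n d) : ChainOp n d := H * O - O * H

/-- The iterated commutator `ad_{H^{(m)}} ∘ ⋯ ∘ ad_{H^{(2)}} ∘ ad_{H^{(1)}} (O)`. -/
noncomputable def multiAd {n d : ℕ} : {m : ℕ} → (Fin m → ChainOp n d) → ChainOp n d → ChainOp n d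
  | 0, _, O => O
  | m + 1, Hs, O => ad (Hs (Fin.last m)) (multiAd (fun j => Hs j.castSucc) O)

/-- The factor `K_s(π)`: it equals `k − 1` if `π_s ≠ 0`, and
`l₀ + (k−1)·#{j < s : π_j ≠ 0}` if `π_s = 0`. -/
def Kfac (k l₀ : ℕ) {m : ℕ} (π : Fin m → SignType) (s : Fin m) : ℕ :=
  if π s = 0 then
    l₀ + (k - 1) * (Finset.univ.filter fun j : Fin m => j < s ∧ π j ≠ 0).card
  else k - 1

/-!
Expanding `ad_{H^{(s)}} = Σ_j ad_{h_j}` at every step and sorting the terms `h_j` by whether they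
reach out of the current support to the left, lie inside it, or reach out to the right, writes the
iterated commutator as a sum over sign patterns `π ∈ {-1, 0, 1}^m`. The summand of `π` lives on an
interval that grows by `k - 1` sites per nonzero sign only, and at step `s` at most `K_s(π)` terms
fail to commute with it, so its norm is at most `‖O‖ ∏_s 2 K_s(π)`. With `z` zero signs this is at
most `‖O‖ (2k)^m (M - z)^z`, `M = m + ã`, and `(M - z)^z ≤ x^(M - x)` for the maximiser
`x = M / W(eM)` of the real function `y ↦ y^(M - y)`, i.e. the solution of `M = x (1 + log x)`.
Summing over the `3^m` sign patterns turns `(2k)^m` into `(6k)^m`.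
-/

open Finset

section

variable {n d : ℕ}

lemma supportedOn_zero (L : Finset (Fin n)) : SupportedOn (0 : ChainOp n d) L :=
  ⟨fun _ _ _ => rfl, fun _ _ _ _ _ _ _ _ => rfl⟩

namespace SupportedOn

variable {A B : ChainOp n d} {L L' : Finset (Fin n)}

lemma mono (hA : SupportedOn A L) (hLL' : L ⊆ L') : SupportedOn A L' := by
  refine ⟨fun x y ⟨i, hi, hxy⟩ => hA.1 x y ⟨i, fun h => hi (hLL' h), hxy⟩, ?_⟩
  intro x y x' y' hx hy hxy hxy'
  by_cases hout : ∀ i ∉ L, x i = y i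
  · have hout' : ∀ i ∉ L, x' i = y' i := fun i hi => by
      by_cases hiL' : i ∈ L'
      · rw [← hx i hiL', ← hy i hiL']; exact hout i hi
      · exact hxy' i hiL'
    exact hA.2 x y x' y' (fun i hi => hx i (hLL' hi)) (fun i hi => hy i (hLL' hi)) hout hout'
  · push Not at hout
    obtain ⟨i, hiL, hne⟩ := hout
    have hiL' : i ∈ L' := by_contra fun h => hne (hxy i h)
    have hne' : x' i ≠ y' i := by rwa [← hx i hiL', ← hy i hiL']
    rw [hA.1 x y ⟨i, hiL, hne⟩, hA.1 x' y' ⟨i, hiL, hne'⟩]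

lemma add (hA : SupportedOn A L) (hB : SupportedOn B L) : SupportedOn (A + B) L :=
  ⟨fun x y hxy => by simp only [Matrix.add_apply, hA.1 x y hxy, hB.1 x y hxy, add_zero],
    fun x y x' y' hx hy hxy hxy' => by
      simp only [Matrix.add_apply, hA.2 x y x' y' hx hy hxy hxy', hB.2 x y x' y' hx hy hxy hxy']⟩

lemma sub (hA : SupportedOn A L) (hB : SupportedOn B L) : SupportedOn (A - B) L :=
  ⟨fun x y hxy => by simp only [Matrix.sub_apply, hA.1 x y hxy, hB.1 x y hxy, sub_zero],
    fun x y x' y' hx hy hxy hxy' => by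
      simp only [Matrix.sub_apply, hA.2 x y x' y' hx hy hxy hxy', hB.2 x y x' y' hx hy hxy hxy']⟩

lemma sum {ι : Type*} {S : Finset ι} {f : ι → ChainOp n d}
    (h : ∀ j ∈ S, SupportedOn (f j) L) : SupportedOn (∑ j ∈ S, f j) L :=
  Finset.sum_induction f (SupportedOn · L) (fun _ _ => add) (supportedOn_zero L) h

lemma mul (hA : SupportedOn A L) (hB : SupportedOn B L) : SupportedOn (A * B) L := by
  classical
  refine ⟨fun x y ⟨i, hi, hxy⟩ => ?_, ?_⟩
  · rw [Matrix.mul_apply]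
    refine Finset.sum_eq_zero fun z _ => ?_
    by_cases hz : z i = x i
    · rw [hB.1 z y ⟨i, hi, hz ▸ hxy⟩, mul_zero]
    · rw [hA.1 x z ⟨i, hi, Ne.symm hz⟩, zero_mul]
  intro x y x' y' hx hy hxy hxy'
  -- Off `L`, swapping `x i` and `x' i` matches the intermediate configurations of both sums.
  let e : (Fin n → Fin d) ≃ (Fin n → Fin d) :=
    Equiv.piCongrRight fun i => if i ∈ L then Equiv.refl _ else Equiv.swap (x i) (x' i)
  have he_mem : ∀ z, ∀ i ∈ L, e z i = z i := fun z i hi => by simp [e, hi]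
  have he_not_mem : ∀ z, ∀ i ∉ L, e z i = Equiv.swap (x i) (x' i) (z i) :=
    fun z i hi => by simp [e, hi]
  simp only [Matrix.mul_apply]
  refine Fintype.sum_equiv e _ _ fun z => ?_
  by_cases hzx : ∀ i ∉ L, z i = x i
  · have hez : ∀ i ∉ L, e z i = x' i := fun i hi => by
      rw [he_not_mem z i hi, hzx i hi, Equiv.swap_apply_left]
    rw [hA.2 x z x' (e z) hx (fun i hi => (he_mem z i hi).symm) (fun i hi => (hzx i hi).symm)
        (fun i hi => (hez i hi).symm),
      hB.2 z y (e z) y' (fun i hi => (he_mem z i hi).symm) hy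
        (fun i hi => (hzx i hi).trans (hxy i hi)) (fun i hi => (hez i hi).trans (hxy' i hi))]
  · push Not at hzx
    obtain ⟨i, hi, hne⟩ := hzx
    have hne' : x' i ≠ e z i := fun hc => hne <| by
      rwa [he_not_mem z i hi, eq_comm, Equiv.swap_apply_eq_iff, Equiv.swap_apply_right] at hc
    rw [hA.1 x z ⟨i, hi, Ne.symm hne⟩, hA.1 x' (e z) ⟨i, hi, hne'⟩, zero_mul, zero_mul]

lemma ad (hA : SupportedOn A L) (hB : SupportedOn B L) : SupportedOn (_root_.ad A B) L :=
  (hA.mul hB).sub (hB.mul hA)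

lemma mul_apply_of_disjoint (hA : SupportedOn A L) (hB : SupportedOn B L') (h : Disjoint L L')
    (x y : Fin n → Fin d) :
    (A * B) x y =
      A x (fun i => if i ∈ L then y i else x i) * B (fun i => if i ∈ L then y i else x i) y := by
  rw [Matrix.mul_apply]
  refine Fintype.sum_eq_single _ fun z hz => ?_
  obtain ⟨i, hi⟩ := Function.ne_iff.mp hz
  by_cases hiL : i ∈ L
  · rw [if_pos hiL] at hi
    rw [hB.1 z y ⟨i, Finset.disjoint_left.mp h hiL, hi⟩, mul_zero]
  · rw [if_neg hiL] at hi
    rw [hA.1 x z ⟨i, hiL, Ne.symm hi⟩, zero_mul]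

lemma commute (hA : SupportedOn A L) (hB : SupportedOn B L') (h : Disjoint L L') :
    Commute A B := by
  ext x y
  rw [hA.mul_apply_of_disjoint hB h, hB.mul_apply_of_disjoint hA h.symm]
  have hL'L : ∀ i ∈ L', i ∉ L := fun i hi => Finset.disjoint_right.mp h hi
  have hLL' : ∀ i ∈ L, i ∉ L' := fun i hi => Finset.disjoint_left.mp h hi
  by_cases hxy : ∀ i ∉ L, i ∉ L' → x i = y i
  · rw [mul_comm]
    congr 1
    · refine (hB.2 _ _ _ _ ?_ ?_ ?_ ?_).symm <;> intro i hi
      all_goals by_cases hiL : i ∈ L <;> simp_all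
    · refine hA.2 _ _ _ _ ?_ ?_ ?_ ?_ <;> intro i hi
      all_goals by_cases hiL' : i ∈ L' <;> simp_all
  · push Not at hxy
    obtain ⟨i, hiL, hiL', hne⟩ := hxy
    rw [hB.1 _ y ⟨i, hiL', by simpa [hiL] using hne⟩,
      hA.1 _ y ⟨i, hiL, by simpa [hiL'] using hne⟩, mul_zero, mul_zero]

end SupportedOn

lemma ad_eq_zero_of_disjoint {H O : ChainOp n d} {L L' : Finset (Fin n)}
    (hH : SupportedOn H L) (hO : SupportedOn O L') (h : Disjoint L L') : ad H O = 0 := by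
  rw [ad, (hH.commute hO h).eq, sub_self]

lemma norm_ad_le (H O : ChainOp n d) : ‖ad H O‖ ≤ 2 * ‖H‖ * ‖O‖ :=
  calc ‖ad H O‖ ≤ ‖H * O‖ + ‖O * H‖ := norm_sub_le _ _
    _ ≤ ‖H‖ * ‖O‖ + ‖O‖ * ‖H‖ :=
        add_le_add (Matrix.l2_opNorm_mul H O) (Matrix.l2_opNorm_mul O H)
    _ = 2 * ‖H‖ * ‖O‖ := by ring

lemma ad_sum_left {ι : Type*} (S : Finset ι) (h : ι → ChainOp n d) (O : ChainOp n d) :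
    ad (∑ j ∈ S, h j) O = ∑ j ∈ S, ad (h j) O := by
  simp only [ad, Finset.sum_mul, Finset.mul_sum, Finset.sum_sub_distrib]

lemma ad_sum_right {ι : Type*} (S : Finset ι) (H : ChainOp n d) (f : ι → ChainOp n d) :
    ad H (∑ j ∈ S, f j) = ∑ j ∈ S, ad H (f j) := by
  simp only [ad, Finset.sum_mul, Finset.mul_sum, Finset.sum_sub_distrib]

lemma mem_chainInterval {a b : ℕ} {i : Fin n} :
    i ∈ chainInterval n a b ↔ a ≤ (i : ℕ) ∧ (i : ℕ) ≤ b := by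
  simp [chainInterval]

lemma chainInterval_subset_chainInterval {a b a' b' : ℕ} (ha : a' ≤ a) (hb : b ≤ b') :
    chainInterval n a b ⊆ chainInterval n a' b' := fun i hi => by
  rw [mem_chainInterval] at hi ⊢
  omega

lemma disjoint_chainInterval {a b a' b' : ℕ} (h : b < a' ∨ b' < a) :
    Disjoint (chainInterval n a b) (chainInterval n a' b') :=
  Finset.disjoint_left.mpr fun i hi hi' => by
    rw [mem_chainInterval] at hi hi'
    omega

lemma chainInterval_subset_chainInterval_card (a b : ℕ) :
    chainInterval n a b ⊆ chainInterval n a (a + #(chainInterval n a b) - 1) := fun i hi => by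
  rw [mem_chainInterval] at hi ⊢
  have hsub : Finset.Icc a (i : ℕ) ⊆ (chainInterval n a b).map Fin.valEmbedding :=
    fun j hj => by
      rw [Finset.mem_Icc] at hj
      exact Finset.mem_map.mpr
        ⟨⟨j, by omega⟩, mem_chainInterval.mpr ⟨hj.1, hj.2.trans hi.2⟩, rfl⟩
  have hcard := Finset.card_le_card hsub
  rw [Nat.card_Icc, Finset.card_map] at hcard
  omega

lemma card_le_of_forall_val_mem_Ico {S : Finset (Fin n)} {lo hi : ℕ}
    (h : ∀ j ∈ S, lo ≤ (j : ℕ) ∧ (j : ℕ) < hi) : #S ≤ hi - lo :=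
  calc #S ≤ #(Finset.Ico lo hi) :=
        Finset.card_le_card_of_injOn Fin.val (fun j hj => Finset.mem_Ico.mpr (h j hj))
          Fin.val_injective.injOn
    _ = hi - lo := Nat.card_Ico lo hi

def IsLocalFamily (k : ℕ) (h : Fin n → ChainOp n d) : Prop :=
  ∀ j : Fin n, SupportedOn (h j) (chainInterval n j ((j : ℕ) + k - 1)) ∧ ‖h j‖ ≤ 1

section Signs

variable {m : ℕ}

def negCount (π : Fin m → SignType) : ℕ := #{s | π s = -1}

def posCount (π : Fin m → SignType) : ℕ := #{s | π s = 1}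

lemma card_filter_snoc {α : Type*} (P : α → Prop) [DecidablePred P] (π : Fin m → α) (σ : α) :
    #{s | P ((Fin.snoc π σ : Fin (m + 1) → α) s)} =
      #{s | P (π s)} + if P σ then 1 else 0 := by
  simp only [Finset.card_filter, Fin.sum_univ_castSucc, Fin.snoc_castSucc, Fin.snoc_last]

lemma negCount_snoc (π : Fin m → SignType) (σ : SignType) :
    negCount (Fin.snoc π σ : Fin (m + 1) → SignType) = negCount π + if σ = -1 then 1 else 0 :=
  card_filter_snoc (· = -1) π σ

lemma posCount_snoc (π : Fin m → SignType) (σ : SignType) :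
    posCount (Fin.snoc π σ : Fin (m + 1) → SignType) = posCount π + if σ = 1 then 1 else 0 :=
  card_filter_snoc (· = 1) π σ

lemma card_ne_zero_eq_negCount_add_posCount (π : Fin m → SignType) :
    #{s | π s ≠ 0} = negCount π + posCount π := by
  rw [negCount, posCount, Finset.card_filter, Finset.card_filter, Finset.card_filter,
    ← Finset.sum_add_distrib]
  refine Finset.sum_congr rfl fun s _ => ?_
  cases π s <;> rfl

variable {k L : ℕ}

lemma Kfac_snoc_castSucc (π : Fin m → SignType) (σ : SignType) (s : Fin m) :
    Kfac k L (Fin.snoc π σ : Fin (m + 1) → SignType) s.castSucc = Kfac k L π s := by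
  simp only [Kfac, Fin.snoc_castSucc, Finset.card_filter, Fin.sum_univ_castSucc,
    Fin.castSucc_lt_castSucc_iff, (Fin.castSucc_lt_last s).not_gt, false_and, if_false, add_zero]

lemma Kfac_snoc_last (π : Fin m → SignType) (σ : SignType) :
    Kfac k L (Fin.snoc π σ : Fin (m + 1) → SignType) (Fin.last m) =
      if σ = 0 then L + (k - 1) * (negCount π + posCount π) else k - 1 := by
  rw [← card_ne_zero_eq_negCount_add_posCount]
  simp only [Kfac, Fin.snoc_last, Finset.card_filter, Fin.sum_univ_castSucc, Fin.snoc_castSucc,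
    Fin.castSucc_lt_last, true_and, lt_irrefl, false_and, if_false, add_zero]

lemma prod_Kfac_snoc (π : Fin m → SignType) (σ : SignType) :
    ∏ s, (2 * (Kfac k L (Fin.snoc π σ : Fin (m + 1) → SignType) s : ℝ)) =
      (∏ s, (2 * (Kfac k L π s : ℝ))) *
        (2 * Kfac k L (Fin.snoc π σ : Fin (m + 1) → SignType) (Fin.last m)) := by
  simp only [Fin.prod_univ_castSucc, Kfac_snoc_castSucc]

end Signs

lemma sum_fun_fin_succ {α M : Type*} [Fintype α] [AddCommMonoid M] {m : ℕ}
    (F : (Fin (m + 1) → α) → M) :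
    ∑ π, F π = ∑ π : Fin m → α, ∑ σ, F (Fin.snoc π σ) := by
  rw [← (Fin.snocEquiv fun _ => α).sum_comp, Fintype.sum_prod_type, Finset.sum_comm]
  rfl

/-- The sign `π_s` of the term `h j` of the next Hamiltonian against an operator supported on
`[p, q]`: `h j` reaches out to the left (`-1`), lies inside (`0`), or reaches out to the right
(`1`). -/
def siteTag (k p q j : ℕ) : SignType :=
  if j < p then -1 else if j + k - 1 ≤ q then 0 else 1

section siteTag

variable {k p q j : ℕ}

lemma siteTag_eq_neg_one_iff : siteTag k p q j = -1 ↔ j < p := by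
  unfold siteTag; split_ifs <;> simp_all

lemma siteTag_eq_zero_iff : siteTag k p q j = 0 ↔ p ≤ j ∧ j + k - 1 ≤ q := by
  unfold siteTag; split_ifs <;> simp_all

lemma siteTag_eq_one_iff : siteTag k p q j = 1 ↔ p ≤ j ∧ q < j + k - 1 := by
  unfold siteTag; split_ifs <;> simp_all; omega

end siteTag

section OneCommutator

variable {k p q : ℕ} {h : Fin n → ChainOp n d} {X : ChainOp n d}

lemma ad_eq_zero_of_not_overlap (hh : IsLocalFamily k h) (hX : SupportedOn X (chainInterval n p q))
    {j : Fin n} (hj : ¬ (p ≤ (j : ℕ) + k - 1 ∧ (j : ℕ) ≤ q)) : ad (h j) X = 0 :=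
  ad_eq_zero_of_disjoint (hh j).1 hX (disjoint_chainInterval (by omega))

lemma supportedOn_sum_ad (hh : IsLocalFamily k h) (hX : SupportedOn X (chainInterval n p q))
    {S : Finset (Fin n)} {p' q' : ℕ} (hp : p' ≤ p) (hq : q ≤ q')
    (hS : ∀ j ∈ S, p ≤ (j : ℕ) + k - 1 → (j : ℕ) ≤ q →
      p' ≤ (j : ℕ) ∧ (j : ℕ) + k - 1 ≤ q') :
    SupportedOn (∑ j ∈ S, ad (h j) X) (chainInterval n p' q') := by
  refine SupportedOn.sum fun j hj => ?_
  by_cases hjX : p ≤ (j : ℕ) + k - 1 ∧ (j : ℕ) ≤ q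
  · obtain ⟨hp', hq'⟩ := hS j hj hjX.1 hjX.2
    exact ((hh j).1.mono (chainInterval_subset_chainInterval hp' hq')).ad
      (hX.mono (chainInterval_subset_chainInterval hp hq))
  · rw [ad_eq_zero_of_not_overlap hh hX hjX]
    exact supportedOn_zero _

lemma norm_sum_ad_le (hh : IsLocalFamily k h) (hX : SupportedOn X (chainInterval n p q))
    {S : Finset (Fin n)} {lo hi : ℕ}
    (hS : ∀ j ∈ S, p ≤ (j : ℕ) + k - 1 → (j : ℕ) ≤ q → lo ≤ (j : ℕ) ∧ (j : ℕ) < hi) :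
    ‖∑ j ∈ S, ad (h j) X‖ ≤ 2 * (hi - lo : ℕ) * ‖X‖ := by
  set S' := S.filter fun j : Fin n => p ≤ (j : ℕ) + k - 1 ∧ (j : ℕ) ≤ q
  have hcard : #S' ≤ hi - lo := card_le_of_forall_val_mem_Ico fun j hj => by
    obtain ⟨hjS, hjX⟩ := Finset.mem_filter.mp hj
    exact hS j hjS hjX.1 hjX.2
  rw [← Finset.sum_filter_of_ne fun j _ hne => by_contra fun hc =>
    hne (ad_eq_zero_of_not_overlap hh hX hc)]
  calc ‖∑ j ∈ S', ad (h j) X‖ ≤ ∑ j ∈ S', ‖ad (h j) X‖ := norm_sum_le _ _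
    _ ≤ ∑ _j ∈ S', 2 * ‖X‖ := Finset.sum_le_sum fun j _ => by
        nlinarith [norm_ad_le (h j) X, (hh j).2, norm_nonneg (h j), norm_nonneg X]
    _ = 2 * #S' * ‖X‖ := by rw [Finset.sum_const, nsmul_eq_mul]; ring
    _ ≤ 2 * (hi - lo : ℕ) * ‖X‖ := by gcongr

lemma sum_ad_siteTag_neg_one (hh : IsLocalFamily k h) (hX : SupportedOn X (chainInterval n p q))
    (hpq : p + k ≤ q + 2) :
    SupportedOn (∑ j ∈ {j : Fin n | siteTag k p q j = -1}, ad (h j) X)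
        (chainInterval n (p - (k - 1)) q) ∧
      ‖∑ j ∈ {j : Fin n | siteTag k p q j = -1}, ad (h j) X‖ ≤
        2 * (k - 1 : ℕ) * ‖X‖ := by
  have hS : ∀ j ∈ ({j : Fin n | siteTag k p q j = -1} : Finset (Fin n)), (j : ℕ) < p :=
    fun j hj => siteTag_eq_neg_one_iff.mp (by simpa using hj)
  refine ⟨supportedOn_sum_ad hh hX (Nat.sub_le _ _) le_rfl fun j hj hpj _ => ?_, ?_⟩
  · have := hS j hj
    omega
  · calc _ ≤ 2 * (p - (p - (k - 1)) : ℕ) * ‖X‖ :=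
          norm_sum_ad_le hh hX fun j hj _ _ => by have := hS j hj; omega
      _ ≤ 2 * (k - 1 : ℕ) * ‖X‖ := by gcongr 2 * (Nat.cast ?_) * _; omega

lemma sum_ad_siteTag_zero (hh : IsLocalFamily k h) (hX : SupportedOn X (chainInterval n p q)) :
    SupportedOn (∑ j ∈ {j : Fin n | siteTag k p q j = 0}, ad (h j) X) (chainInterval n p q) ∧
      ‖∑ j ∈ {j : Fin n | siteTag k p q j = 0}, ad (h j) X‖ ≤
        2 * (q + 2 - k - p : ℕ) * ‖X‖ := by
  have hS : ∀ j ∈ ({j : Fin n | siteTag k p q j = 0} : Finset (Fin n)),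
      p ≤ (j : ℕ) ∧ (j : ℕ) + k - 1 ≤ q :=
    fun j hj => siteTag_eq_zero_iff.mp (by simpa using hj)
  exact ⟨supportedOn_sum_ad hh hX le_rfl le_rfl fun j hj _ _ => hS j hj,
    norm_sum_ad_le hh hX fun j hj _ _ => by have := hS j hj; omega⟩

lemma sum_ad_siteTag_one (hh : IsLocalFamily k h) (hX : SupportedOn X (chainInterval n p q)) :
    SupportedOn (∑ j ∈ {j : Fin n | siteTag k p q j = 1}, ad (h j) X)
        (chainInterval n p (q + (k - 1))) ∧
      ‖∑ j ∈ {j : Fin n | siteTag k p q j = 1}, ad (h j) X‖ ≤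
        2 * (k - 1 : ℕ) * ‖X‖ := by
  have hS : ∀ j ∈ ({j : Fin n | siteTag k p q j = 1} : Finset (Fin n)),
      p ≤ (j : ℕ) ∧ q < (j : ℕ) + k - 1 :=
    fun j hj => siteTag_eq_one_iff.mp (by simpa using hj)
  refine ⟨supportedOn_sum_ad hh hX le_rfl (Nat.le_add_right _ _) fun j hj _ _ => ?_, ?_⟩
  · have := hS j hj
    omega
  · calc _ ≤ 2 * (q + 1 - (q + 2 - k) : ℕ) * ‖X‖ :=
          norm_sum_ad_le hh hX fun j hj _ _ => by have := hS j hj; omega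
      _ ≤ 2 * (k - 1 : ℕ) * ‖X‖ := by gcongr 2 * (Nat.cast ?_) * _; omega

end OneCommutator

lemma sum_ad_siteTag_snoc {k a b L m : ℕ} (hab : b + 2 = a + k + L) {h : Fin n → ChainOp n d}
    (hh : IsLocalFamily k h) {X : ChainOp n d} {π : Fin m → SignType}
    (hX : SupportedOn X (chainInterval n (a - (k - 1) * negCount π) (b + (k - 1) * posCount π)))
    (σ : SignType) :
    SupportedOn
        (∑ j ∈ {j : Fin n |
            siteTag k (a - (k - 1) * negCount π) (b + (k - 1) * posCount π) j = σ}, ad (h j) X)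
        (chainInterval n (a - (k - 1) * negCount (Fin.snoc π σ : Fin (m + 1) → SignType))
          (b + (k - 1) * posCount (Fin.snoc π σ : Fin (m + 1) → SignType))) ∧
      ‖∑ j ∈ {j : Fin n |
          siteTag k (a - (k - 1) * negCount π) (b + (k - 1) * posCount π) j = σ}, ad (h j) X‖ ≤
        2 * Kfac k L (Fin.snoc π σ : Fin (m + 1) → SignType) (Fin.last m) * ‖X‖ := by
  rw [negCount_snoc, posCount_snoc, Kfac_snoc_last]
  obtain rfl | rfl | rfl := σ.trichotomy <;>
    simp (disch := decide) only [if_pos, if_neg, add_zero, mul_add_one, ← Nat.sub_sub,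
      ← add_assoc]
  · exact sum_ad_siteTag_neg_one hh hX (by omega)
  · obtain ⟨hsupp, hnorm⟩ := sum_ad_siteTag_zero hh hX
    refine ⟨hsupp, hnorm.trans ?_⟩
    gcongr 2 * (Nat.cast ?_) * _
    rw [Nat.mul_add]
    omega
  · exact sum_ad_siteTag_one hh hX

theorem exists_multiAd_eq_sum {k a b L : ℕ} (hab : b + 2 = a + k + L) {O : ChainOp n d}
    (hO : SupportedOn O (chainInterval n a b)) {m : ℕ} (Hs : Fin m → ChainOp n d)
    (hHs : ∀ s, IsLocalHam n d k (Hs s)) :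
    ∃ A : (Fin m → SignType) → ChainOp n d, multiAd Hs O = ∑ π, A π ∧
      ∀ π, SupportedOn (A π)
          (chainInterval n (a - (k - 1) * negCount π) (b + (k - 1) * posCount π)) ∧
        ‖A π‖ ≤ ‖O‖ * ∏ s, (2 * (Kfac k L π s : ℝ)) := by
  induction m with
  | zero =>
    exact ⟨fun _ => O, by simp [multiAd], fun π => by simpa [negCount, posCount] using hO⟩
  | succ m ih =>
    obtain ⟨A, hsum, hA⟩ := ih (fun s => Hs s.castSucc) fun s => hHs _
    obtain ⟨h, hH, hh⟩ := hHs (Fin.last m)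
    let Y (π : Fin m → SignType) (σ : SignType) : ChainOp n d :=
      ∑ j ∈ {j : Fin n |
          siteTag k (a - (k - 1) * negCount π) (b + (k - 1) * posCount π) j = σ}, ad (h j) (A π)
    refine ⟨fun π' => Y (Fin.init π') (π' (Fin.last m)), ?_, fun π' => ?_⟩
    · rw [sum_fun_fin_succ]
      simp only [Fin.init_snoc, Fin.snoc_last, Y, Finset.sum_fiberwise]
      rw [multiAd, hsum, hH, ad_sum_right]
      simp only [ad_sum_left]
    · obtain ⟨π, σ, rfl⟩ : ∃ π σ, π' = Fin.snoc π σ :=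
        ⟨_, _, (Fin.snoc_init_self π').symm⟩
      simp only [Y, Fin.init_snoc, Fin.snoc_last]
      obtain ⟨hsupp, hnorm⟩ := sum_ad_siteTag_snoc hab hh (hA π).1 σ
      refine ⟨hsupp, hnorm.trans ?_⟩
      rw [prod_Kfac_snoc, ← mul_assoc, mul_comm _ (2 * _ : ℝ)]
      exact mul_le_mul_of_nonneg_left (hA π).2 (by positivity)

open Real in
lemma sub_pow_le_rpow_of_eq_mul_one_add_log {M x : ℝ} (hx : 0 < x) (hM : M = x * (1 + log x))
    {z : ℕ} (hz : (z : ℝ) ≤ M) : (M - z) ^ z ≤ x ^ (M - x) := by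
  have hMx : M - x = x * log x := by rw [hM]; ring
  have hone_le : 1 ≤ x ^ (M - x) := by
    rw [rpow_def_of_pos hx, hMx]
    exact one_le_exp (by nlinarith [mul_nonneg hx.le (sq_nonneg (log x))])
  obtain hy | hy := (sub_nonneg.mpr hz).eq_or_lt
  · rw [← hy]
    rcases Nat.eq_zero_or_pos z with rfl | hz0
    · simpa using hone_le
    · rw [zero_pow hz0.ne']
      positivity
  set y := M - z with hy_def
  -- `log` lies below its tangent at `x`; the remaining gap is a perfect square.
  have htangent : log y ≤ log x + y / x - 1 := by
    have := log_le_sub_one_of_pos (div_pos hy hx)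
    rw [log_div hy.ne' hx.ne'] at this
    linarith
  have hsquare :
      (z : ℝ) * (log x + y / x - 1) = log x * (x * log x) - (x * log x - z) ^ 2 / x := by
    rw [hy_def, hM]
    field_simp
    ring
  rw [← exp_log (pow_pos hy z), rpow_def_of_pos hx, hMx, log_pow]
  refine exp_le_exp.mpr ?_
  calc (z : ℝ) * log y ≤ z * (log x + y / x - 1) :=
        mul_le_mul_of_nonneg_left htangent z.cast_nonneg
    _ = log x * (x * log x) - (x * log x - z) ^ 2 / x := hsquare
    _ ≤ log x * (x * log x) := sub_le_self _ (by positivity)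

section KfacBound

variable {k L m : ℕ}

lemma Kfac_le (π : Fin m → SignType) (s : Fin m) :
    Kfac k L π s ≤ if π s = 0 then L + k * (m - #{s | π s = 0}) else k := by
  have hcompl : #{s | π s ≠ 0} = m - #{s | π s = 0} := by
    have := Finset.card_filter_add_card_filter_not (s := Finset.univ) (fun s => π s = 0)
    simp only [Finset.card_univ, Fintype.card_fin, ne_eq] at this ⊢
    omega
  unfold Kfac
  split_ifs
  · gcongr
    · omega
    · rw [← hcompl]
      exact Finset.card_le_card fun j hj => by
        simp only [Finset.mem_filter] at hj ⊢
        exact ⟨hj.1, hj.2.2⟩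
  · omega

lemma prod_two_mul_Kfac_le (hk : 0 < k) (π : Fin m → SignType) :
    ∏ s, (2 * (Kfac k L π s : ℝ)) ≤
      (2 * k) ^ m * ((m : ℝ) + L / k - #{s | π s = 0}) ^ #{s | π s = 0} := by
  set z := #{s | π s = 0}
  have hzm : z ≤ m := (Finset.card_filter_le _ _).trans (by simp)
  have hfactor : ∀ s, 2 * (Kfac k L π s : ℝ) ≤
      2 * k * (if π s = 0 then (m : ℝ) + L / k - z else 1) := fun s => by
    have := Kfac_le (k := k) (L := L) π s
    split_ifs at this ⊢
    · have hcast : (Kfac k L π s : ℝ) ≤ L + k * ((m : ℝ) - z) := by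
        exact_mod_cast (Nat.cast_le.mpr this).trans_eq (by push_cast [Nat.cast_sub hzm]; ring)
      have : (k : ℝ) * ((m : ℝ) + L / k - z) = L + k * ((m : ℝ) - z) := by field_simp; ring
      nlinarith
    · have : (Kfac k L π s : ℝ) ≤ k := by exact_mod_cast this
      linarith
  calc ∏ s, (2 * (Kfac k L π s : ℝ))
      ≤ ∏ s, (2 * k * (if π s = 0 then (m : ℝ) + L / k - z else 1)) :=
        Finset.prod_le_prod (fun _ _ => by positivity) fun s _ => hfactor s
    _ = (2 * k) ^ m * ((m : ℝ) + L / k - z) ^ z := by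
        rw [Finset.prod_mul_distrib, Finset.prod_const, Finset.card_univ, Fintype.card_fin,
          Finset.prod_ite, Finset.prod_const, Finset.prod_const_one, mul_one]

lemma sum_prod_two_mul_Kfac_le (hk : 0 < k) {x : ℝ} (hx : 0 < x)
    (hM : (m : ℝ) + L / k = x * (1 + Real.log x)) :
    ∑ π : Fin m → SignType, ∏ s, (2 * (Kfac k L π s : ℝ)) ≤
      (6 * k) ^ m * x ^ ((m : ℝ) + L / k - x) := by
  have hterm : ∀ π : Fin m → SignType,
      ∏ s, (2 * (Kfac k L π s : ℝ)) ≤ (2 * k) ^ m * x ^ ((m : ℝ) + L / k - x) := by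
    intro π
    refine (prod_two_mul_Kfac_le hk π).trans (mul_le_mul_of_nonneg_left
      (sub_pow_le_rpow_of_eq_mul_one_add_log hx hM ?_) (by positivity))
    have : (#{s | π s = 0} : ℝ) ≤ m := by
      exact_mod_cast (Finset.card_filter_le _ _).trans (by simp)
    have : (0 : ℝ) ≤ L / k := by positivity
    linarith
  calc _ ≤ ∑ _π : Fin m → SignType, (2 * k : ℝ) ^ m * x ^ ((m : ℝ) + L / k - x) :=
        Finset.sum_le_sum fun π _ => hterm π
    _ = (6 * k) ^ m * x ^ ((m : ℝ) + L / k - x) := by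
        rw [Finset.sum_const, Finset.card_univ, Fintype.card_fun, Fintype.card_fin, nsmul_eq_mul,
          show Fintype.card SignType = 3 from rfl]
        push_cast
        rw [← mul_assoc, ← mul_pow, ← mul_assoc]
        norm_num

end KfacBound

end

theorem multi_commutator_norm_bound_lambertW_general
    (n d k : ℕ) (hk : 2 ≤ k)
    (m : ℕ)
    (Hs : Fin m → ChainOp n d) (hHs : ∀ s : Fin m, IsLocalHam n d k (Hs s))
    (a b l₀ : ℕ) (O : ChainOp n d)
    (hO : SupportedOn O (chainInterval n a b))
    (hl₀ : (chainInterval n a b).card = l₀)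
    (aTilde : ℝ) (haTilde : aTilde = (l₀ : ℝ) / (k : ℝ))
    (w : ℝ) (hw : 0 < w) (hwe : w * Real.exp w = Real.exp 1 * ((m : ℝ) + aTilde)) :
    ‖multiAd Hs O‖ ≤
      ‖O‖ * (6 * (k : ℝ)) ^ m *
        (((m : ℝ) + aTilde) / w) ^ (((m : ℝ) + aTilde) - ((m : ℝ) + aTilde) / w) := by
  subst haTilde
  set M : ℝ := (m : ℝ) + l₀ / k
  have hx : M / w = Real.exp (w - 1) := by
    rw [div_eq_iff hw.ne', Real.exp_sub, div_mul_eq_mul_div, eq_div_iff (Real.exp_pos 1).ne']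
    linarith
  have hM : M = M / w * (1 + Real.log (M / w)) := by
    rw [hx, Real.log_exp, add_sub_cancel, ← hx, div_mul_cancel₀ _ hw.ne']
  have hO' : SupportedOn O (chainInterval n a (a + k + l₀ - 2)) :=
    hO.mono ((chainInterval_subset_chainInterval_card a b).trans
      (chainInterval_subset_chainInterval le_rfl (by omega)))
  obtain ⟨A, hsum, hA⟩ := exists_multiAd_eq_sum (L := l₀) (by omega) hO' Hs hHs
  calc ‖multiAd Hs O‖ ≤ ∑ π, ‖A π‖ := hsum ▸ norm_sum_le _ _
    _ ≤ ∑ π, ‖O‖ * ∏ s, (2 * (Kfac k l₀ π s : ℝ)) :=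
        Finset.sum_le_sum fun π _ => (hA π).2
    _ = ‖O‖ * ∑ π, ∏ s, (2 * (Kfac k l₀ π s : ℝ)) := (Finset.mul_sum _ _ _).symm
    _ ≤ ‖O‖ * ((6 * k) ^ m * (M / w) ^ (M - M / w)) :=
        mul_le_mul_of_nonneg_left (sum_prod_two_mul_Kfac_le (by omega) (hx ▸ Real.exp_pos _) hM)
          (norm_nonneg O)
    _ = ‖O‖ * (6 * k) ^ m * (M / w) ^ (M - M / w) := (mul_assoc _ _ _).symm

/-- Corollary 4 of the paper: the iterated-commutator norm bound in Lambert-W form. With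
`aTilde = l₀/k` and `w > 0` the solution of `w·e^w = e·(m+aTilde)` (i.e. `w = W[e(m+aTilde)]`, so that
`(m+aTilde)/w = (m+aTilde)/W[e(m+aTilde)]`), one has
`‖ad_{H^{(m)}} ⋯ ad_{H^{(1)}}(O)‖ ≤ ‖O‖·(6k)^m·((m+aTilde)/w)^{(m+aTilde) − (m+aTilde)/w}`. -/
theorem multi_commutator_norm_bound_lambertW
    (n d k : ℕ) (hn : 1 ≤ n) (hd : 2 ≤ d) (hk : 2 ≤ k)
    (m : ℕ) (hm : 1 ≤ m)
    (Hs : Fin m → ChainOp n d) (hHs : ∀ s : Fin m, IsLocalHam n d k (Hs s))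
    (a b l₀ : ℕ) (O : ChainOp n d)
    (hO : SupportedOn O (chainInterval n a b))
    (hl₀ : (chainInterval n a b).card = l₀)
    (aTilde : ℝ) (haTilde : aTilde = (l₀ : ℝ) / (k : ℝ))
    (w : ℝ) (hw : 0 < w) (hwe : w * Real.exp w = Real.exp 1 * ((m : ℝ) + aTilde)) :
    ‖multiAd Hs O‖ ≤
      ‖O‖ * (6 * (k : ℝ)) ^ m *
        (((m : ℝ) + aTilde) / w) ^ (((m : ℝ) + aTilde) - ((m : ℝ) + aTilde) / w) :=
  multi_commutator_norm_bound_lambertW_general n d k hk m Hs hHs a b l₀ O hO hl₀ aTilde haTilde w hw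
    hwe
end

section
/- Let H and H∂ be Hermitian complex matrices of the same size, let O be any complex matrix of that size, and let β be real. For s ∈ [0,1] set H(s) := H − s·H∂, Z(s) := tr exp(−β·H(s)) (a positive real), and ρ(s) := exp(−β·H(s))/Z(s). Then tr(ρ(1)·O) − tr(ρ(0)·O) = β·∫₀¹∫₀¹ [ tr(exp(−β(1−κ)H(s))·H∂·exp(−βκH(s))·O)/Z(s) − tr(ρ(s)·O)·tr(ρ(s)·H∂) ] dκ ds (the truncation formula, Eq. (12) of the paper in integrated form). -/
open scoped Matrix.Norms.L2Operator

/-- `exp(−t·(H − s·H∂))`, the Gibbs-type exponential of the interpolated Hamiltonian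
`H(s) = H − s·H∂` at (inverse-temperature-like) parameter `t`. -/
noncomputable def expH {N : ℕ} (H Hpart : Matrix (Fin N) (Fin N) ℂ) (s t : ℝ) :
    Matrix (Fin N) (Fin N) ℂ :=
  NormedSpace.exp ((-(t : ℂ)) • (H - (s : ℂ) • Hpart))

/-- The Gibbs state `ρ(s) := exp(−βH(s))/Z(s)` for `H(s) = H − s·H∂`,
`Z(s) = tr exp(−βH(s))`. -/
noncomputable def gibbsState {N : ℕ} (H Hpart : Matrix (Fin N) (Fin N) ℂ) (β s : ℝ) :
    Matrix (Fin N) (Fin N) ℂ :=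
  ((expH H Hpart s β).trace)⁻¹ • expH H Hpart s β

/-!
Duhamel's formula `exp X - exp Y = ∫₀¹ exp((1-κ)Y) (X - Y) exp(κX) dκ`, applied to `X = -βH(u)`,
`Y = -βH(s)` and divided by `u - s`, shows that `s ↦ exp(-βH(s))` has derivative
`β ∫₀¹ exp(-β(1-κ)H(s)) H∂ exp(-βκH(s)) dκ`. By cyclicity of the trace,
`Z'(s) = β tr(exp(-βH(s)) H∂)`, so the quotient rule turns `d/ds tr(ρ(s) O)` into `β` times the
inner integral, and the formula is the fundamental theorem of calculus in `s`. The quotient makes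
sense because `exp(-βH(s)) = Pᴴ P` with `P = exp(-βH(s)/2)` invertible, so `Z(s) > 0`.
-/

open NormedSpace intervalIntegral
open scoped ComplexOrder Matrix

theorem HasDerivAt.comp_ofReal' {E : Type*} [NormedAddCommGroup E] [NormedSpace ℂ E] {f : ℂ → E}
    {f' : E} {t : ℝ} (hf : HasDerivAt f f' t) : HasDerivAt (fun u : ℝ => f u) f' t := by
  simpa [Function.comp_def] using hf.scomp t Complex.ofRealCLM.hasDerivAt

section BanachAlgebra

variable {𝔸 : Type*} [NormedRing 𝔸] [NormedAlgebra ℂ 𝔸] [CompleteSpace 𝔸]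

theorem continuous_exp_ofReal_smul_mul_exp_ofReal_smul {F G : ℝ → 𝔸} (hF : Continuous F)
    (hG : Continuous G) (B : 𝔸) :
    Continuous fun p : ℝ × ℝ =>
      exp (((1 - p.2 : ℝ) : ℂ) • F p.1) * B * exp ((p.2 : ℂ) • G p.1) := by
  let +nondep : NormedAlgebra ℚ 𝔸 := .restrictScalars ℚ ℂ 𝔸
  fun_prop

/-- Duhamel's formula. -/
theorem exp_sub_exp_eq_integral (X Y : 𝔸) :
    exp X - exp Y =
      ∫ κ in (0 : ℝ)..1, exp (((1 - κ : ℝ) : ℂ) • Y) * (X - Y) * exp ((κ : ℂ) • X) := by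
  have hderiv : ∀ κ : ℝ, HasDerivAt (fun u : ℝ => exp (((1 - u : ℝ) : ℂ) • Y) * exp ((u : ℂ) • X))
      (exp (((1 - κ : ℝ) : ℂ) • Y) * (X - Y) * exp ((κ : ℂ) • X)) κ := by
    intro κ
    have hY := (hasDerivAt_exp_smul_const Y ((1 - κ : ℝ) : ℂ)).comp_ofReal'.scomp κ
      ((hasDerivAt_id κ).const_sub 1)
    refine (hY.mul (hasDerivAt_exp_smul_const' X (κ : ℂ)).comp_ofReal').congr_deriv ?_
    simp only [Function.comp_apply, neg_smul, one_smul, neg_mul, sub_mul, mul_sub, mul_assoc]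
    abel
  have hcont := (continuous_exp_ofReal_smul_mul_exp_ofReal_smul (continuous_const (y := Y))
    (continuous_const (y := X)) (X - Y)).comp (Continuous.prodMk_right (0 : ℝ))
  rw [integral_eq_sub_of_hasDerivAt (fun κ _ => hderiv κ) (hcont.intervalIntegrable 0 1)]
  simp

theorem hasDerivAt_exp_add_smul (A B : 𝔸) (s : ℝ) :
    HasDerivAt (fun u : ℝ => exp (A + (u : ℂ) • B))
      (∫ κ in (0 : ℝ)..1, exp (((1 - κ : ℝ) : ℂ) • (A + (s : ℂ) • B)) * B *
        exp ((κ : ℂ) • (A + (s : ℂ) • B))) s := by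
  set Φ : ℝ → 𝔸 := fun y => ∫ κ in (0 : ℝ)..1,
    exp (((1 - κ : ℝ) : ℂ) • (A + (s : ℂ) • B)) * B * exp ((κ : ℂ) • (A + (y : ℂ) • B))
  have hΦ : Continuous Φ := continuous_parametric_intervalIntegral_of_continuous'
    (continuous_exp_ofReal_smul_mul_exp_ofReal_smul continuous_const
      (continuous_const.add (Complex.continuous_ofReal.smul continuous_const)) B) 0 1
  have hslope : ∀ y ≠ s, slope (fun u : ℝ => exp (A + (u : ℂ) • B)) s y = Φ y := by
    intro y hy
    rw [slope_def_module, exp_sub_exp_eq_integral, add_sub_add_left_eq_sub, ← sub_smul,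
      ← integral_smul]
    refine integral_congr fun κ _ => ?_
    rw [← Complex.ofReal_sub, mul_smul_comm, smul_mul_assoc, Complex.coe_smul, smul_smul,
      inv_mul_cancel₀ (sub_ne_zero.2 hy), one_smul]
  rw [hasDerivAt_iff_tendsto_slope]
  exact ((hΦ.tendsto s).mono_left nhdsWithin_le_nhds).congr'
    (eventually_nhdsWithin_of_forall fun y hy => (hslope y hy).symm)

end BanachAlgebra

theorem Matrix.IsHermitian.trace_exp_pos {n : Type*} [Fintype n] [DecidableEq n] [Nonempty n]
    {K : Matrix n n ℂ} (hK : K.IsHermitian) : 0 < (NormedSpace.exp K).trace := by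
  set P := NormedSpace.exp ((2⁻¹ : ℂ) • K)
  have hP : P.IsHermitian := (hK.smul (by simp [IsSelfAdjoint])).exp
  have hPP : NormedSpace.exp K = Pᴴ * P := by
    rw [hP.eq, ← Matrix.exp_add_of_commute _ _ (Commute.refl _), ← add_smul]
    norm_num
  rw [hPP]
  exact (Matrix.PosDef.conjTranspose_mul_self P
    (Matrix.mulVec_injective_iff_isUnit.2 (Matrix.isUnit_exp _))).trace_pos

section Gibbs

open Matrix

variable {N : ℕ} (H Hpart : Matrix (Fin N) (Fin N) ℂ)

lemma expH_add (s t₁ t₂ : ℝ) :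
    expH H Hpart s (t₁ + t₂) = expH H Hpart s t₁ * expH H Hpart s t₂ := by
  rw [expH, expH, expH,
    ← Matrix.exp_add_of_commute _ _ ((Commute.refl _).smul_left _ |>.smul_right _), ← add_smul]
  push_cast; ring_nf

lemma trace_expH_mul_mul_expH (s t₁ t₂ : ℝ) (X : Matrix (Fin N) (Fin N) ℂ) :
    (expH H Hpart s t₁ * X * expH H Hpart s t₂).trace = (expH H Hpart s (t₁ + t₂) * X).trace := by
  rw [trace_mul_cycle, add_comm, expH_add, Matrix.mul_assoc]

@[fun_prop]
lemma continuous_expH : Continuous fun p : ℝ × ℝ => expH H Hpart p.1 p.2 := by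
  let +nondep : NormedAlgebra ℚ (Matrix (Fin N) (Fin N) ℂ) := .restrictScalars ℚ ℂ _
  unfold expH
  fun_prop

lemma exp_smul_eq_expH (s t c : ℝ) :
    NormedSpace.exp ((c : ℂ) • (-(t : ℂ) • H + (s : ℂ) • ((t : ℂ) • Hpart))) =
      expH H Hpart s (t * c) := by
  rw [expH]
  congr 1
  push_cast
  module

lemma hasDerivAt_expH (s t : ℝ) :
    HasDerivAt (fun u => expH H Hpart u t)
      ((t : ℂ) • ∫ κ in (0 : ℝ)..1,
        expH H Hpart s (t * (1 - κ)) * Hpart * expH H Hpart s (t * κ)) s := by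
  have h := hasDerivAt_exp_add_smul (-(t : ℂ) • H) ((t : ℂ) • Hpart) s
  have hexp (u : ℝ) : NormedSpace.exp (-(t : ℂ) • H + (u : ℂ) • ((t : ℂ) • Hpart)) =
      expH H Hpart u t := by
    simpa using exp_smul_eq_expH H Hpart u t 1
  simpa only [hexp, exp_smul_eq_expH, mul_smul_comm, smul_mul_assoc, integral_smul] using h

lemma trace_gibbsState_mul (β s : ℝ) (X : Matrix (Fin N) (Fin N) ℂ) :
    (gibbsState H Hpart β s * X).trace =
      (expH H Hpart s β * X).trace / (expH H Hpart s β).trace := by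
  rw [gibbsState, smul_mul, trace_smul, smul_eq_mul, div_eq_inv_mul]

lemma hasDerivAt_trace_expH_mul (X : Matrix (Fin N) (Fin N) ℂ) (s t : ℝ) :
    HasDerivAt (fun u => (expH H Hpart u t * X).trace)
      ((t : ℂ) * ∫ κ in (0 : ℝ)..1,
        (expH H Hpart s (t * (1 - κ)) * Hpart * expH H Hpart s (t * κ) * X).trace) s := by
  let L : Matrix (Fin N) (Fin N) ℂ →L[ℂ] ℂ :=
    (Matrix.traceLinearMap (Fin N) ℂ ℂ ∘ₗ LinearMap.mulRight ℂ X).toContinuousLinearMap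
  have hcont : Continuous fun κ : ℝ =>
      expH H Hpart s (t * (1 - κ)) * Hpart * expH H Hpart s (t * κ) := by
    fun_prop
  have h := (L.restrictScalars ℝ).hasFDerivAt.comp_hasDerivAt s (hasDerivAt_expH H Hpart s t)
  refine h.congr_deriv ?_
  simp only [ContinuousLinearMap.coe_restrictScalars', map_smul, smul_eq_mul]
  rw [← L.intervalIntegral_comp_comm (hcont.intervalIntegrable 0 1)]
  rfl

lemma trace_expH_ne_zero [NeZero N] (hH : H.IsHermitian) (hHpart : Hpart.IsHermitian) (s t : ℝ) :
    (expH H Hpart s t).trace ≠ 0 :=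
  ((hH.sub (hHpart.smul (Complex.conj_ofReal s))).smul
    (IsSelfAdjoint.neg (Complex.conj_ofReal t : IsSelfAdjoint (t : ℂ)))).trace_exp_pos.ne'

variable (O : Matrix (Fin N) (Fin N) ℂ)

noncomputable def truncationIntegrand (β s κ : ℝ) : ℂ :=
  (expH H Hpart s (β * (1 - κ)) * Hpart * expH H Hpart s (β * κ) * O).trace /
      (expH H Hpart s β).trace -
    (gibbsState H Hpart β s * O).trace * (gibbsState H Hpart β s * Hpart).trace

theorem hasDerivAt_trace_gibbsState_mul (β s : ℝ) (hZ : (expH H Hpart s β).trace ≠ 0) :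
    HasDerivAt (fun u => (gibbsState H Hpart β u * O).trace)
      ((β : ℂ) * ∫ κ in (0 : ℝ)..1, truncationIntegrand H Hpart O β s κ) s := by
  have hρ : (fun u => (gibbsState H Hpart β u * O).trace) =
      fun u => (expH H Hpart u β * O).trace / (expH H Hpart u β * 1).trace := by
    simp only [trace_gibbsState_mul, Matrix.mul_one]
  have hZ' : (expH H Hpart s β * 1).trace ≠ 0 := by rwa [Matrix.mul_one]
  rw [hρ]
  refine ((hasDerivAt_trace_expH_mul H Hpart O s β).div
    (hasDerivAt_trace_expH_mul H Hpart 1 s β) hZ').congr_deriv ?_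
  have hcyc (κ : ℝ) : (expH H Hpart s (β * (1 - κ)) * Hpart * expH H Hpart s (β * κ)).trace =
      (expH H Hpart s β * Hpart).trace := by
    rw [trace_expH_mul_mul_expH]; ring_nf
  have hcont : Continuous fun κ : ℝ =>
      (expH H Hpart s (β * (1 - κ)) * Hpart * expH H Hpart s (β * κ) * O).trace /
        (expH H Hpart s β).trace := by
    fun_prop
  simp only [truncationIntegrand, hcyc, trace_gibbsState_mul, Matrix.mul_one,
    integral_sub (hcont.intervalIntegrable 0 1) intervalIntegrable_const, integral_div,
    intervalIntegral.integral_const, sub_zero, one_smul]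
  field_simp

theorem continuous_integral_truncationIntegrand (β : ℝ)
    (hZ : ∀ s, (expH H Hpart s β).trace ≠ 0) :
    Continuous fun s => ∫ κ in (0 : ℝ)..1, truncationIntegrand H Hpart O β s κ := by
  refine continuous_parametric_intervalIntegral_of_continuous' ?_ 0 1
  show Continuous fun p : ℝ × ℝ => truncationIntegrand H Hpart O β p.1 p.2
  simp only [truncationIntegrand, trace_gibbsState_mul]
  fun_prop (disch := exact fun p => hZ p.1)

end Gibbs

/-- The truncation formula (Eq. (12) of the paper) in integrated form: for Hermitian `H`,
`H∂`, with `H(s) := H − s·H∂`, `Z(s) := tr exp(−βH(s))` and `ρ(s) := exp(−βH(s))/Z(s)`,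
`tr(ρ(1)·O) − tr(ρ(0)·O)
  = β·∫₀¹∫₀¹ [tr(exp(−β(1−κ)H(s))·H∂·exp(−βκH(s))·O)/Z(s)
              − tr(ρ(s)·O)·tr(ρ(s)·H∂)] dκ ds`. -/
theorem truncation_formula {N : ℕ} (H Hpart O : Matrix (Fin N) (Fin N) ℂ)
    (hH : H.IsHermitian) (hHpart : Hpart.IsHermitian) (β : ℝ) :
    (gibbsState H Hpart β 1 * O).trace - (gibbsState H Hpart β 0 * O).trace =
      (β : ℂ) * ∫ s in (0 : ℝ)..1, ∫ κ in (0 : ℝ)..1,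
        ((expH H Hpart s (β * (1 - κ)) * Hpart * expH H Hpart s (β * κ) * O).trace /
            (expH H Hpart s β).trace -
          (gibbsState H Hpart β s * O).trace * (gibbsState H Hpart β s * Hpart).trace) := by
  rcases eq_zero_or_neZero N with rfl | _
  · simp [Matrix.trace]
  have hZ (s : ℝ) := trace_expH_ne_zero H Hpart hH hHpart s β
  have hcont := (continuous_integral_truncationIntegrand H Hpart O β hZ).const_mul (β : ℂ)
  rw [← integral_const_mul]
  exact (integral_eq_sub_of_hasDerivAt
    (fun s _ => hasDerivAt_trace_gibbsState_mul H Hpart O β s (hZ s))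
    (hcont.intervalIntegrable 0 1)).symm
end
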